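/- arXiv:1705.09828 — 3 statements merged into one kernel-verified Lean document; each statement's English description precedes it below -/
import Mathlib

section
/- If A is a real N×N matrix such that A + I has only nonnegative entries and (A+I)^n has all strictly positive entries for some n, then the matrix exponential e^{At} has all strictly positive entries for every t > 0. -/
/-!
Since `t • A = t • (A + 1) - t • 1` with commuting summands, `exp (t • A)` is the positive
multiple `Real.exp (-t)` of `exp (t • (A + 1))`. The exponential series of the entrywise
nonnegative matrix `t • (A + 1)` has entrywise nonnegative terms, and its `n`-th term is
entrywise positive, so its sum is entrywise positive.
-/

open NormedSpace

namespace Matrix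

variable {ι : Type*} [Fintype ι] [DecidableEq ι]

section

attribute [local instance] Matrix.linftyOpNormedRing Matrix.linftyOpNormedAlgebra

theorem hasSum_exp_apply (B : Matrix ι ι ℝ) (i j : ι) :
    HasSum (fun k => (k.factorial : ℝ)⁻¹ * (B ^ k) i j) (exp B i j) :=
  Pi.hasSum.mp (Pi.hasSum.mp (exp_series_hasSum_exp' (𝕂 := ℝ) B) i) j

end

theorem exp_add_smul_one (B : Matrix ι ι ℝ) (c : ℝ) :
    exp (B + c • 1) = Real.exp c • exp B := by
  rw [exp_add_of_commute _ _ ((Commute.one_right B).smul_right c), smul_one_eq_diagonal,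
    exp_diagonal, Pi.exp_def, ← Real.exp_eq_exp_ℝ, ← smul_one_eq_diagonal, mul_smul_one]

theorem exp_apply_pos_of_pow_apply_pos {B : Matrix ι ι ℝ} (hB : ∀ i j, 0 ≤ B i j) {i j : ι}
    {n : ℕ} (hn : 0 < (B ^ n) i j) : 0 < exp B i j :=
  calc 0 < (n.factorial : ℝ)⁻¹ * (B ^ n) i j := by positivity
    _ ≤ exp B i j := le_hasSum (hasSum_exp_apply B i j) n fun k _ => by
      have := pow_apply_nonneg hB k i j
      positivity

end Matrix

/-- If A + I has nonnegative entries and some power of A + I has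
all strictly positive entries, then e^{At} has all strictly positive entries
for every t > 0. -/
theorem stmt1 (N : ℕ) (A : Matrix (Fin N) (Fin N) ℝ)
    (hnonneg : ∀ i j, 0 ≤ (A + 1) i j)
    (hreg : ∃ n : ℕ, ∀ i j, 0 < ((A + 1) ^ n) i j) :
    ∀ t : ℝ, 0 < t → ∀ i j, 0 < (exp (t • A)) i j := by
  intro t ht i j
  obtain ⟨n, hn⟩ := hreg
  have hshift : t • A = t • (A + 1) + (-t) • 1 := by module
  have htB_nonneg : ∀ i j, 0 ≤ (t • (A + 1)) i j := fun i j =>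
    mul_nonneg ht.le (hnonneg i j)
  have htB_pow_pos : 0 < ((t • (A + 1)) ^ n) i j := by
    rw [smul_pow, Matrix.smul_apply]
    exact mul_pos (pow_pos ht n) (hn i j)
  rw [hshift, Matrix.exp_add_smul_one, Matrix.smul_apply, smul_eq_mul]
  exact mul_pos (Real.exp_pos _) (Matrix.exp_apply_pos_of_pow_apply_pos htB_nonneg htB_pow_pos)
end

section
/- Suppose the vector q = (q₁,…,q_N) ∈ [0,1]^N satisfies, for all 1 ≤ l ≤ N, q_l = θ(q_{l+1} 1_{l<N} + 1_{l=N}) + (1−θ) r_l F + (1−θ)(1−r_l), where F ∈ [0,1] is a fixed constant (the same for all l) and 0 < θ < 1. Then for every 1 ≤ l < N, q_{N−l} = (q_N − 1) ∑_{i=0}^{l} θ^{l−i} (r_{N−i}/r_N) + 1. -/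
open Finset

/-- The extinction-probability fixed point system implies the
closed-form relation q_{N−l} = (q_N − 1) ∑_{i=0}^{l} θ^{l−i}(r_{N−i}/r_N) + 1. -/
theorem stmt5 (N : ℕ) (hN : 2 ≤ N) (θ : ℝ) (hθ0 : 0 < θ) (hθ1 : θ < 1)
    (r q : ℕ → ℝ) (hr : ∀ i, 1 ≤ i → i ≤ N → 0 < r i)
    (F : ℝ) (hF0 : 0 ≤ F) (hF1 : F ≤ 1)
    (hq : ∀ l, 1 ≤ l → l ≤ N → q l ∈ Set.Icc (0 : ℝ) 1)
    (hfix : ∀ l, 1 ≤ l → l ≤ N →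
      q l = θ * (if l < N then q (l + 1) else 1)
        + (1 - θ) * r l * F + (1 - θ) * (1 - r l)) :
    ∀ l, 1 ≤ l → l < N →
      q (N - l) = (q N - 1) * (∑ i ∈ range (l + 1), θ ^ (l - i) * (r (N - i) / r N)) + 1 := by
  have hrN : 0 < r N := hr N (by omega) le_rfl
  have hqN : q N - 1 = r N * ((1 - θ) * (F - 1)) := by
    have h := hfix N (by omega) le_rfl
    rw [if_neg (lt_irrefl N)] at h
    rw [h]; ring
  have key : ∀ l, 1 ≤ l → l < N →
      q l - 1 = θ * (q (l + 1) - 1) + r l * ((q N - 1) / r N) := by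
    intro l h1 h2
    have h := hfix l h1 (le_of_lt h2)
    rw [if_pos h2] at h
    rw [hqN, h]
    field_simp
    ring
  intro l h1 h2
  induction l with
  | zero => omega
  | succ n ih =>
    rcases Nat.eq_or_lt_of_le h1 with h | h
    · obtain rfl : n = 0 := by omega
      have hk := key (N - 1) (by omega) (by omega)
      have he : N - 1 + 1 = N := by omega
      rw [he] at hk
      have hsum0 : ∑ i ∈ range (0 + 1 + 1), θ ^ (0 + 1 - i) * (r (N - i) / r N)
          = θ + r (N - 1) / r N := by
        simp [Finset.sum_range_succ, div_self hrN.ne']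
      rw [hsum0]
      field_simp at hk ⊢
      linarith [hk]
    · have hn1 : 1 ≤ n := by omega
      have ihn := ih hn1 (by omega)
      have hk := key (N - (n + 1)) (by omega) (by omega)
      have he : N - (n + 1) + 1 = N - n := by omega
      rw [he, ihn] at hk
      have hsum : ∑ i ∈ range (n + 1 + 1), θ ^ (n + 1 - i) * (r (N - i) / r N)
          = θ * (∑ i ∈ range (n + 1), θ ^ (n - i) * (r (N - i) / r N))
            + r (N - (n + 1)) / r N := by
        rw [Finset.sum_range_succ, Finset.mul_sum]
        congr 1
        · apply Finset.sum_congr rfl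
          intro i hi
          have hin : i ≤ n := by simpa [Nat.lt_succ_iff] using hi
          have : n + 1 - i = (n - i) + 1 := by omega
          rw [this, pow_succ]
          ring
        · simp
      rw [hsum]
      linear_combination hk
end

section
/- Let O = (1−θ) m η (1−ρ) d₁ d₂ / ((1−θd₂)(1−ρd₂)). If O < 1, then the limit as N → ∞ of the expected shares ⟨y,ρ⟩ (given by the closed-form fixed point S_N = (1−θ)mηK_N/(1−(1−θ)mηK_N) with K_N the truncated double geometric sum) equals O/(1−O). -/
/-!
Substituting `l = k + 1` and `j = N - l - i`, the sum `K_N` is `ρ̃ d₁` times the `N`-th partial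
sum of the Cauchy product of the absolutely convergent geometric series `∑ (ρ d₂)^(k+1)` and
`∑ (θ d₂)^j`. By Mertens' theorem it converges to the product `ρ d₂ / ((1 - ρ d₂)(1 - θ d₂))` of
their sums, so `(1 - θ) m η K_N → O`, and `S_N → O / (1 - O)` because `x ↦ x / (1 - x)` is
continuous at `O ≠ 1`.
-/

open Finset Filter

theorem tendsto_sum_range_mul_sum_range_sub {R : Type*} [NormedRing R] [CompleteSpace R]
    {f g : ℕ → R} (hf : Summable fun n => ‖f n‖) (hg : Summable fun n => ‖g n‖) :
    Tendsto (fun N => ∑ k ∈ range N, f k * ∑ j ∈ range (N - k), g j) atTop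
      (nhds ((∑' n, f n) * ∑' n, g n)) := by
  have hcauchy : HasSum (fun n => ∑ k ∈ range (n + 1), f k * g (n - k))
      ((∑' n, f n) * ∑' n, g n) := by
    rw [tsum_mul_tsum_eq_tsum_sum_range_of_summable_norm hf hg]
    exact (summable_norm_sum_mul_range_of_summable_norm hf hg).of_norm.hasSum
  refine hcauchy.tendsto_sum_nat.congr fun N => ?_
  simp only [sum_range_diag_flip N fun k j => f k * g j, mul_sum]

theorem sum_Icc_pow_mul_sum_range_eq (ρ θ d : ℝ) (N : ℕ) :
    ∑ l ∈ Icc 1 N, ρ ^ l * ∑ i ∈ range (N - l + 1), θ ^ (N - l - i) * d ^ (N - i) =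
      ∑ k ∈ range N, (ρ * d) ^ (k + 1) * ∑ j ∈ range (N - k), (θ * d) ^ j := by
  rw [← Ico_add_one_right_eq_Icc, sum_Ico_eq_sum_range, Nat.add_sub_cancel]
  refine sum_congr rfl fun k hk => ?_
  rw [mem_range] at hk
  have hlen : N - (1 + k) + 1 = N - k := by omega
  rw [hlen, ← sum_range_reflect, mul_sum, mul_sum]
  refine sum_congr rfl fun j hj => ?_
  rw [mem_range] at hj
  have hθexp : N - (1 + k) - (N - k - 1 - j) = j := by omega
  have hdexp : N - (N - k - 1 - j) = (k + 1) + j := by omega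
  rw [hθexp, hdexp]
  ring

theorem tendsto_sum_Icc_pow_mul_sum_range (ρ θ d : ℝ) (hρd : |ρ * d| < 1) (hθd : |θ * d| < 1) :
    Tendsto (fun N => ∑ l ∈ Icc 1 N, ρ ^ l *
        ∑ i ∈ range (N - l + 1), θ ^ (N - l - i) * d ^ (N - i)) atTop
      (nhds (ρ * d / ((1 - ρ * d) * (1 - θ * d)))) := by
  have hf : Summable fun k => ‖(ρ * d) ^ (k + 1)‖ := by
    simpa [norm_pow, pow_succ] using
      (summable_geometric_of_lt_one (abs_nonneg _) hρd).mul_right |ρ * d|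
  have hg : Summable fun j => ‖(θ * d) ^ j‖ := by
    simpa [norm_pow] using summable_geometric_of_lt_one (abs_nonneg _) hθd
  have htsum_f : ∑' k, (ρ * d) ^ (k + 1) = ρ * d / (1 - ρ * d) := by
    simp_rw [pow_succ, tsum_mul_right, tsum_geometric_of_abs_lt_one hρd, div_eq_inv_mul]
  have hlim := tendsto_sum_range_mul_sum_range_sub hf hg
  rw [htsum_f, tsum_geometric_of_abs_lt_one hθd, ← div_eq_mul_inv, div_div] at hlim
  simpa only [sum_Icc_pow_mul_sum_range_eq] using hlim

theorem stmt10_general (θ m η ρ d₁ d₂ : ℝ)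
    (hθ0 : 0 < θ) (hθ1 : θ < 1)
    (hρ0 : 0 < ρ) (hρ1 : ρ < 1) (hd₂0 : 0 < d₂) (hd₂1 : d₂ < 1)
    (ρt : ℝ) (hρt : ρt = (1 - ρ) / ρ)
    (ρl r : ℕ → ℝ) (hρl : ∀ l, ρl l = ρt * ρ ^ l) (hr : ∀ l, r l = d₁ * d₂ ^ l)
    (K : ℕ → ℝ)
    (hK : ∀ N, K N = ∑ l ∈ Icc 1 N, ρl l *
      (∑ i ∈ range (N - l + 1), θ ^ (N - l - i) * r (N - i)))
    (O : ℝ)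
    (hO : O = (1 - θ) * m * η * (1 - ρ) * d₁ * d₂ / ((1 - θ * d₂) * (1 - ρ * d₂)))
    (hO1 : O < 1)
    (S : ℕ → ℝ)
    (hS : ∀ N, S N = (1 - θ) * m * η * K N / (1 - (1 - θ) * m * η * K N)) :
    Tendsto S atTop (nhds (O / (1 - O))) := by
  have hρd : ρ * d₂ < 1 := by nlinarith
  have hθd : θ * d₂ < 1 := by nlinarith
  have hK_eq : ∀ N, K N = ρt * d₁ * ∑ l ∈ Icc 1 N, ρ ^ l *
      ∑ i ∈ range (N - l + 1), θ ^ (N - l - i) * d₂ ^ (N - i) := by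
    intro N
    simp only [hK, hρl, hr, mul_sum]
    exact sum_congr rfl fun _ _ => sum_congr rfl fun _ _ => by ring
  have hK_lim : Tendsto (fun N => (1 - θ) * m * η * K N) atTop (nhds O) := by
    have hlim := (tendsto_sum_Icc_pow_mul_sum_range ρ θ d₂
      (abs_lt.2 ⟨by nlinarith, hρd⟩) (abs_lt.2 ⟨by nlinarith, hθd⟩)).const_mul
        ((1 - θ) * m * η * (ρt * d₁))
    convert hlim using 1
    · simp only [hK_eq, mul_assoc]
    · rw [hO, hρt]
      field_simp [sub_ne_zero.2 hρd.ne', sub_ne_zero.2 hθd.ne']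
  rw [show S = _ from funext hS]
  exact hK_lim.div (tendsto_const_nhds.sub hK_lim) (sub_ne_zero.2 hO1.ne')

/-- With O = (1−θ)mη(1−ρ)d₁d₂/((1−θd₂)(1−ρd₂)) < 1, the
expected shares S_N = (1−θ)mηK_N/(1−(1−θ)mηK_N) converge to O/(1−O) as
N → ∞, where K_N is the truncated double geometric sum. -/
theorem stmt10 (θ m η ρ d₁ d₂ : ℝ)
    (hθ0 : 0 < θ) (hθ1 : θ < 1) (hm : 0 < m) (hη : 0 < η)
    (hρ0 : 0 < ρ) (hρ1 : ρ < 1) (hd₁ : 0 < d₁) (hd₂0 : 0 < d₂) (hd₂1 : d₂ < 1)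
    (ρt : ℝ) (hρt : ρt = (1 - ρ) / ρ)
    (ρl r : ℕ → ℝ) (hρl : ∀ l, ρl l = ρt * ρ ^ l) (hr : ∀ l, r l = d₁ * d₂ ^ l)
    (K : ℕ → ℝ)
    (hK : ∀ N, K N = ∑ l ∈ Icc 1 N, ρl l *
      (∑ i ∈ range (N - l + 1), θ ^ (N - l - i) * r (N - i)))
    (O : ℝ)
    (hO : O = (1 - θ) * m * η * (1 - ρ) * d₁ * d₂ / ((1 - θ * d₂) * (1 - ρ * d₂)))
    (hO1 : O < 1)
    (S : ℕ → ℝ)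
    (hS : ∀ N, S N = (1 - θ) * m * η * K N / (1 - (1 - θ) * m * η * K N)) :
    Tendsto S atTop (nhds (O / (1 - O))) :=
  stmt10_general θ m η ρ d₁ d₂ hθ0 hθ1 hρ0 hρ1 hd₂0 hd₂1 ρt hρt ρl r hρl hr K hK O hO hO1 S hS
end
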